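/- Let W be the k-vector space with basis {e_{(a,b)}} indexed by pairs of functions a, b : {1,…,m} → {0,1,…,ℓ−1}, and define k-linear maps ρ_i on W by ρ_i(e_{(a,b)}) = q^{b_i} · e_{(a+ε_i, b+η_i)} if a_i ≤ ℓ−2 and ρ_i(e_{(a,b)}) = 0 if a_i = ℓ−1, where ε_i is the i-th standard unit vector, η_i = ε_1 + ⋯ + ε_{i−1} (so η_1 = 0), and the addition b+η_i is taken modulo ℓ. (ρ_i is right multiplication by X_i h_i on the algebra A = Λ ⋊ G, so for λ ∈ k^m the operator ρ_λ = λ_1ρ_1 + ⋯ + λ_mρ_m is right multiplication by τ_λ(t), and the images of ρ_λ^{ℓ−1} and ρ_λ are the left ideals V(λ) = A·τ_λ(t)^{ℓ−1} and V′(λ) = A·τ_λ(t) of the paper.) Then for every nonzero λ ∈ k^m: dim_k(image of ρ_λ^{ℓ−1}) = ℓ^{2m−1} and dim_k(image of ρ_λ) = (ℓ−1)·ℓ^{2m−1}. (This is Lemma 2.4(iii): dim V(λ) = ℓ^{2m−1} and dim V′(λ) = (ℓ−1)ℓ^{2m−1}.) -/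

import Mathlib

/-- The index set for the standard basis of the regular representation `W` of
`A = Λ ⋊ G`: pairs of functions `a, b : {1,…,m} → {0,…,ℓ−1}`. -/
abbrev QEAIdx (m ℓ : ℕ) := (Fin m → Fin ℓ) × (Fin m → Fin ℓ)

/-- The `k`-vector space `W` with basis `e_{(a,b)}` indexed by `QEAIdx m ℓ`,
realized as the space of `k`-valued functions on the (finite) index set. -/
abbrev QEASpace (k : Type*) [Field k] (m ℓ : ℕ) := QEAIdx m ℓ → k

/-- The operator `ρ_i` on `W` (right multiplication by `X_i h_i` on `A = Λ ⋊ G`):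
`ρ_i (e_{(a,b)}) = q^{b_i} · e_{(a+ε_i, b+η_i)}` if `a_i ≤ ℓ−2` and `ρ_i (e_{(a,b)}) = 0` if
`a_i = ℓ−1`, where `η_i = ε_1 + ⋯ + ε_{i−1}` (so `η_1 = 0`) and `b + η_i` is taken mod `ℓ`.
(In coordinates, `(ρ_i f)(a,b) = q^{b_i} · f(a−ε_i, b−η_i)` when `a_i ≥ 1`, else `0`;
here `(b−η_i)_i = b_i` since `(η_i)_i = 0`.) -/
def qeaRho (k : Type*) [Field k] (q : k) (m ℓ : ℕ) [NeZero ℓ] (i : Fin m) :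
    Module.End k (QEASpace k m ℓ) where
  toFun f := fun p =>
    if 1 ≤ (p.1 i).val then
      q ^ (p.2 i).val *
        f (Function.update p.1 i (p.1 i - 1), fun j => if j < i then p.2 j - 1 else p.2 j)
    else 0
  map_add' f g := by
    funext p; by_cases h : 1 ≤ (p.1 i).val <;> simp [h, mul_add]
  map_smul' c f := by
    funext p; by_cases h : 1 ≤ (p.1 i).val <;> simp [h] <;> ring

/-!
Fix `i₀` with `λ_{i₀} ≠ 0`. For `i < j` the operators satisfy `ρ_i ρ_j = q ρ_j ρ_i`, and
`ρ_i^ℓ = 0`; since `q` is a primitive `ℓ`-th root of unity the Gaussian binomials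
`[ℓ choose j]_q` with `0 < j < ℓ` vanish, so the `q`-binomial theorem gives `ρ_λ^ℓ = 0`.

Filter `W` by the `i₀`-th coordinate `a_{i₀}` of the basis indices. The operator `ρ_λ` raises
this filtration by one, and on the top piece it acts as `λ_{i₀} ρ_{i₀}`, which is injective as
long as it does not leave `{a_{i₀} ≤ ℓ - 1}`. Hence `ρ_λ^{ℓ-1}` is injective on the span of the
`ℓ^{2m-1}` basis vectors with `a_{i₀} = 0`, i.e. `rank ρ_λ^{ℓ-1} ≥ ℓ^{2m-1}`.

Finally, for any `N` with `N^ℓ = 0` on a space of dimension `ℓ r`, the drops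
`rank N^j - rank N^{j+1} = dim (ker N ⊓ range N^j)` decrease in `j`; if the last one,
`rank N^{ℓ-1}`, is at least `r`, all `ℓ` of them equal `r`, so `rank N^j = (ℓ - j) r`.
-/

open Finset

section GaussBinom

variable {k : Type*} [CommRing k] (q : k)

/-- The Gaussian binomial `[i + j choose j]_q`: the coefficient of `v^i u^j` in `(u + v)^(i + j)`
when `u v = q v u`. -/
def gaussBinom : ℕ → ℕ → k
  | 0, _ => 1
  | _ + 1, 0 => 1
  | i + 1, j + 1 => q ^ (i + 1) * gaussBinom (i + 1) j + gaussBinom i (j + 1)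

@[simp] lemma gaussBinom_zero_left (j : ℕ) : gaussBinom q 0 j = 1 := by
  rw [gaussBinom]

@[simp] lemma gaussBinom_zero_right (i : ℕ) : gaussBinom q i 0 = 1 := by
  cases i <;> rw [gaussBinom]

lemma gaussBinom_succ_succ (i j : ℕ) :
    gaussBinom q (i + 1) (j + 1) =
      q ^ (i + 1) * gaussBinom q (i + 1) j + gaussBinom q i (j + 1) := by
  rw [gaussBinom]

lemma sub_one_mul_gaussBinom : ∀ i j : ℕ,
    (q ^ (j + 1) - 1) * gaussBinom q i (j + 1) = (q ^ (i + 1) - 1) * gaussBinom q (i + 1) j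
  | 0, 0 => by simp
  | 0, j + 1 => by
    have h := sub_one_mul_gaussBinom 0 j
    simp only [gaussBinom_zero_left, gaussBinom_succ_succ] at h ⊢
    linear_combination q * h
  | i + 1, 0 => by
    have h := sub_one_mul_gaussBinom i 0
    simp only [gaussBinom_zero_right, gaussBinom_succ_succ] at h ⊢
    linear_combination h
  | i + 1, j + 1 => by
    have h₁ := sub_one_mul_gaussBinom i (j + 1)
    have h₂ := sub_one_mul_gaussBinom (i + 1) j
    rw [gaussBinom_succ_succ q i (j + 1), gaussBinom_succ_succ q (i + 1) j]
    linear_combination h₁ + q ^ (i + 2) * h₂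

lemma gaussBinom_eq_zero [IsDomain k] {ℓ : ℕ} (hq : IsPrimitiveRoot q ℓ) :
    ∀ {i j : ℕ}, i + j + 2 = ℓ → gaussBinom q (i + 1) (j + 1) = 0
  | i, 0, h => by
    have key := sub_one_mul_gaussBinom q (i + 1) 0
    rw [gaussBinom_zero_right, show i + 1 + 1 = ℓ by omega, hq.pow_eq_one, sub_self,
      zero_mul] at key
    exact (mul_eq_zero.mp key).resolve_left
      (sub_ne_zero.mpr (hq.pow_ne_one_of_pos_of_lt (by omega) (by omega)))
  | i, j + 1, h => by
    have key := sub_one_mul_gaussBinom q (i + 1) (j + 1)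
    rw [gaussBinom_eq_zero hq (i := i + 1) (j := j) (by omega), mul_zero] at key
    exact (mul_eq_zero.mp key).resolve_left
      (sub_ne_zero.mpr (hq.pow_ne_one_of_pos_of_lt (by omega) (by omega)))

end GaussBinom

section QCommute

variable {k R : Type*} [CommRing k] [Ring R] [Algebra k R] {q : k} {u v : R}

lemma mul_pow_of_mul_eq_smul (h : u * v = q • (v * u)) (a : ℕ) :
    u * v ^ a = q ^ a • (v ^ a * u) := by
  induction a with
  | zero => simp
  | succ a ih =>
    rw [pow_succ, ← mul_assoc, ih, smul_mul_assoc, mul_assoc, h, mul_smul_comm, smul_smul,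
      ← mul_assoc, ← pow_succ, pow_succ]

lemma add_pow_eq_sum_gaussBinom (h : u * v = q • (v * u)) (n : ℕ) :
    (u + v) ^ n = ∑ p ∈ antidiagonal n, gaussBinom q p.1 p.2 • (v ^ p.1 * u ^ p.2) := by
  induction n with
  | zero => simp
  | succ n ih =>
    have hmul (a b : ℕ) : (u + v) * (v ^ a * u ^ b) =
        q ^ a • (v ^ a * u ^ (b + 1)) + v ^ (a + 1) * u ^ b := by
      rw [add_mul, ← mul_assoc, mul_pow_of_mul_eq_smul h, smul_mul_assoc, mul_assoc, ← pow_succ',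
        ← mul_assoc, ← pow_succ']
    rw [pow_succ', ih, mul_sum]
    simp only [mul_smul_comm, hmul, smul_add, smul_smul, sum_add_distrib]
    rcases n with _ | n
    · simp [Nat.sum_antidiagonal_succ]
    rw [Nat.sum_antidiagonal_succ' (n := n + 1),
      Nat.sum_antidiagonal_succ (n := n)
        (f := fun p => gaussBinom q p.1 (p.2 + 1) • (v ^ p.1 * u ^ (p.2 + 1))),
      Nat.sum_antidiagonal_succ (n := n)
        (f := fun p => (gaussBinom q p.1 p.2 * q ^ p.1) • (v ^ p.1 * u ^ (p.2 + 1))),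
      Nat.sum_antidiagonal_succ' (n := n)
        (f := fun p => gaussBinom q p.1 p.2 • (v ^ (p.1 + 1) * u ^ p.2))]
    simp only [gaussBinom_succ_succ, add_smul, sum_add_distrib, gaussBinom_zero_left,
      gaussBinom_zero_right, mul_comm (gaussBinom q _ _), pow_zero, mul_one, one_smul]
    abel

lemma add_pow_eq_pow_add_pow_of_mul_eq_smul [IsDomain k] {ℓ : ℕ} (hq : IsPrimitiveRoot q ℓ)
    (hℓ : 0 < ℓ) (h : u * v = q • (v * u)) : (u + v) ^ ℓ = u ^ ℓ + v ^ ℓ := by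
  rw [add_pow_eq_sum_gaussBinom h, sum_eq_add_of_mem (0, ℓ) (ℓ, 0) (by simp) (by simp)
    (by simp [Prod.ext_iff]; omega)]
  · simp
  rintro ⟨_ | i, _ | j⟩ hij hne <;> simp only [HasAntidiagonal.mem_antidiagonal] at hij
  · omega
  · simp_all
  · simp_all
  · rw [gaussBinom_eq_zero q hq (by omega), zero_smul]

lemma sum_pow_eq_sum_pow_of_mul_eq_smul [IsDomain k] {ℓ : ℕ} (hq : IsPrimitiveRoot q ℓ)
    (hℓ : 0 < ℓ) {ι : Type*} [LinearOrder ι] (x : ι → R) (s : Finset ι)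
    (h : ∀ i ∈ s, ∀ j ∈ s, i < j → x i * x j = q • (x j * x i)) :
    (∑ i ∈ s, x i) ^ ℓ = ∑ i ∈ s, x i ^ ℓ := by
  induction s using induction_on_min with
  | empty => simp [zero_pow hℓ.ne']
  | insert a s ha ih =>
    have ha' : a ∉ s := fun has => lt_irrefl a (ha a has)
    rw [sum_insert ha', sum_insert ha', add_pow_eq_pow_add_pow_of_mul_eq_smul hq hℓ,
      ih fun i hi j hj => h i (mem_insert_of_mem hi) j (mem_insert_of_mem hj)]
    rw [mul_sum, sum_mul, smul_sum]
    exact sum_congr rfl fun i hi =>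
      h a (mem_insert_self a s) i (mem_insert_of_mem hi) (ha i hi)

end QCommute

section NilpotentRank

open Module LinearMap

variable {K V : Type*} [DivisionRing K] [AddCommGroup V] [Module K V] [FiniteDimensional K V]

lemma finrank_range_pow_succ_add_finrank_ker_inf (f : Module.End K V) (j : ℕ) :
    finrank K (range (f ^ (j + 1))) + finrank K ↥(ker f ⊓ range (f ^ j)) =
      finrank K (range (f ^ j)) := by
  have hrange : range (f.domRestrict (range (f ^ j))) = range (f ^ (j + 1)) := by
    rw [range_domRestrict, pow_succ', Module.End.mul_eq_comp, range_comp]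
  have hker : finrank K (ker (f.domRestrict (range (f ^ j)))) =
      finrank K ↥(ker f ⊓ range (f ^ j)) := by
    rw [ker_domRestrict, ← Submodule.finrank_map_subtype_eq, Submodule.map_comap_subtype,
      inf_comm]
  rw [← hrange, ← hker, finrank_range_add_finrank_ker]

lemma two_mul_finrank_range_pow_succ_le (f : Module.End K V) (j : ℕ) :
    2 * finrank K (range (f ^ (j + 1))) ≤
      finrank K (range (f ^ j)) + finrank K (range (f ^ (j + 2))) := by
  have h₀ := finrank_range_pow_succ_add_finrank_ker_inf f j
  have h₁ : finrank K (range (f ^ (j + 2))) + finrank K ↥(ker f ⊓ range (f ^ (j + 1))) =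
      finrank K (range (f ^ (j + 1))) := finrank_range_pow_succ_add_finrank_ker_inf f (j + 1)
  have hle : finrank K ↥(ker f ⊓ range (f ^ (j + 1))) ≤ finrank K ↥(ker f ⊓ range (f ^ j)) := by
    refine Submodule.finrank_mono (inf_le_inf_left _ ?_)
    rw [pow_succ, Module.End.mul_eq_comp]
    exact range_comp_le_range _ _
  omega

theorem finrank_range_pow_of_pow_eq_zero {f : Module.End K V} {n r : ℕ} (hf : f ^ n = 0)
    (hV : finrank K V = n * r) (hr : r ≤ finrank K (range (f ^ (n - 1)))) {j : ℕ}
    (hj : j ≤ n) : finrank K (range (f ^ j)) = (n - j) * r := by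
  set d : ℕ → ℕ := fun j => finrank K (range (f ^ j)) with hd
  have hconv (i : ℕ) : 2 * d (i + 1) ≤ d i + d (i + 2) := two_mul_finrank_range_pow_succ_le f i
  have hd₀ : d 0 = n * r := by
    show finrank K (range (f ^ 0)) = _
    rw [pow_zero, Module.End.one_eq_id, range_id, finrank_top, hV]
  have hdn : d n = 0 := by simp [hd, hf]
  have hdrop : ∀ t i, i + t + 1 = n → d (i + 1) + r ≤ d i := by
    intro t
    induction t with
    | zero => intro i hi; subst hi; simpa [hdn] using hr
    | succ t ih =>
      intro i hi
      have h₁ : d (i + 2) + r ≤ d (i + 1) := ih (i + 1) (by omega)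
      have := hconv i
      omega
  have hlower : ∀ t i, i + t = n → t * r ≤ d i := by
    intro t
    induction t with
    | zero => simp
    | succ t ih =>
      intro i hi
      have := ih (i + 1) (by omega)
      have := hdrop t i (by omega)
      rw [Nat.succ_mul]
      omega
  have hupper : ∀ i ≤ n, d i + i * r ≤ n * r := by
    intro i
    induction i with
    | zero => simp [hd₀]
    | succ i ih =>
      intro hi
      have := ih (by omega)
      have := hdrop (n - i - 1) i (by omega)
      rw [Nat.succ_mul]
      omega
  have h₁ := hlower (n - j) j (by omega)
  have h₂ := hupper j hj
  have h₃ : (n - j) * r + j * r = n * r := by rw [← add_mul, Nat.sub_add_cancel hj]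
  show d j = _
  omega

end NilpotentRank

section Operators

variable {k : Type*} [Field k] {q : k} {m ℓ : ℕ} [NeZero ℓ]

def qeaRhoLam (q : k) (ℓ : ℕ) [NeZero ℓ] (lam : Fin m → k) : Module.End k (QEASpace k m ℓ) :=
  ∑ i, lam i • qeaRho k q m ℓ i

lemma qeaRho_apply (i : Fin m) (f : QEASpace k m ℓ) (p : QEAIdx m ℓ) :
    qeaRho k q m ℓ i f p =
      if 1 ≤ (p.1 i).val then
        q ^ (p.2 i).val *
          f (Function.update p.1 i (p.1 i - 1), fun j => if j < i then p.2 j - 1 else p.2 j)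
      else 0 := rfl

lemma qeaRhoLam_apply (lam : Fin m → k) (f : QEASpace k m ℓ) (p : QEAIdx m ℓ) :
    qeaRhoLam q ℓ lam f p = ∑ i, lam i * qeaRho k q m ℓ i f p := by
  simp [qeaRhoLam]

lemma pow_val_sub_one_mul (hq : q ^ ℓ = 1) (x : Fin ℓ) : q ^ (x - 1).val * q = q ^ x.val := by
  rw [← pow_succ, pow_eq_pow_mod _ hq]
  congr 1
  have h := congrArg Fin.val (sub_add_cancel x 1)
  rwa [Fin.val_add, Fin.val_one', Nat.add_mod_mod] at h

lemma val_sub_one_of_one_le {x : Fin ℓ} (h : 1 ≤ x.val) : (x - 1).val = x.val - 1 :=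
  Fin.val_sub_one_of_ne_zero (Fin.pos_iff_ne_zero.mp h)

lemma qeaRho_pow_apply_eq_zero (i : Fin m) {s : ℕ} (f : QEASpace k m ℓ) {p : QEAIdx m ℓ}
    (hp : (p.1 i).val < s) : (qeaRho k q m ℓ i ^ s) f p = 0 := by
  induction s generalizing f p with
  | zero => omega
  | succ s ih =>
    rw [pow_succ', Module.End.mul_apply, qeaRho_apply]
    split_ifs with h
    · rw [ih _ (by dsimp only; rw [Function.update_self, val_sub_one_of_one_le h]; omega),
        mul_zero]
    · rfl

lemma qeaRho_pow_eq_zero (i : Fin m) : qeaRho k q m ℓ i ^ ℓ = 0 :=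
  LinearMap.ext fun f => funext fun p => qeaRho_pow_apply_eq_zero i f (p.1 i).isLt

/-- Applied first, `ρ_j` lowers `b_i` by one (as `i < j`) while `ρ_i` leaves `b_j` alone, and
`q^{b_i} = q · q^{b_i - 1}` also when `b_i = 0` since `q^ℓ = 1`. -/
lemma qeaRho_mul_qeaRho_of_lt (hq : q ^ ℓ = 1) {i j : Fin m} (hij : i < j) :
    qeaRho k q m ℓ i * qeaRho k q m ℓ j = q • (qeaRho k q m ℓ j * qeaRho k q m ℓ i) := by
  have hji : ¬ j < i := asymm hij
  refine LinearMap.ext fun f => funext fun p => ?_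
  simp only [Module.End.mul_apply, LinearMap.smul_apply, Pi.smul_apply, smul_eq_mul,
    qeaRho_apply, Function.update_of_ne hij.ne, Function.update_of_ne hij.ne', hji, hij,
    if_true, if_false]
  have hA : Function.update (Function.update p.1 i (p.1 i - 1)) j (p.1 j - 1) =
      Function.update (Function.update p.1 j (p.1 j - 1)) i (p.1 i - 1) :=
    Function.update_comm hij.ne _ _ _
  have hB : (fun l => if l < j then (if l < i then p.2 l - 1 else p.2 l) - 1
        else if l < i then p.2 l - 1 else p.2 l) =
      fun l => if l < i then (if l < j then p.2 l - 1 else p.2 l) - 1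
        else if l < j then p.2 l - 1 else p.2 l := by
    funext l
    by_cases h₁ : l < i
    · simp [h₁, h₁.trans hij]
    · by_cases h₂ : l < j <;> simp [h₁, h₂]
  rw [hA, hB]
  split_ifs <;> first | (rw [← pow_val_sub_one_mul hq (p.2 i)]; ring) | ring

lemma qeaRhoLam_pow_eq_zero (hq : IsPrimitiveRoot q ℓ) (lam : Fin m → k) :
    qeaRhoLam q ℓ lam ^ ℓ = 0 := by
  rw [qeaRhoLam, sum_pow_eq_sum_pow_of_mul_eq_smul hq (NeZero.pos ℓ)]
  · simp [smul_pow, qeaRho_pow_eq_zero]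
  · intro i _ j _ hij
    rw [smul_mul_smul_comm, smul_mul_smul_comm, qeaRho_mul_qeaRho_of_lt hq.pow_eq_one hij,
      smul_comm, mul_comm (lam j)]

end Operators

section Filtration

variable {k : Type*} [Field k] {m ℓ : ℕ} (i₀ : Fin m)

def qeaDegLT (t : ℕ) : Submodule k (QEASpace k m ℓ) where
  carrier := {f | ∀ p : QEAIdx m ℓ, t ≤ (p.1 i₀).val → f p = 0}
  add_mem' hf hg p hp := by simp [hf p hp, hg p hp]
  zero_mem' _ _ := rfl
  smul_mem' _ _ hf p hp := by simp [hf p hp]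

lemma qeaDegLT_zero : qeaDegLT (k := k) (ℓ := ℓ) i₀ 0 = ⊥ :=
  eq_bot_iff.mpr fun _ hf => funext fun p => hf p (Nat.zero_le _)

lemma single_mem_qeaDegLT (p : QEAIdx m ℓ) :
    (Pi.single p 1 : QEASpace k m ℓ) ∈ qeaDegLT i₀ ((p.1 i₀).val + 1) := by
  intro p' hp'
  exact Pi.single_eq_of_ne (by rintro rfl; omega) _

variable {q : k} [NeZero ℓ]

/-- The index `(a + ε_i, b + η_i)`, so that `ρ_i e_p = q^{b_i} e_{qeaRaise i p}`. -/
def qeaRaise (i : Fin m) (p : QEAIdx m ℓ) : QEAIdx m ℓ :=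
  (Function.update p.1 i (p.1 i + 1), fun j => if j < i then p.2 j + 1 else p.2 j)

lemma qeaRaise_fst_apply_self (i : Fin m) (p : QEAIdx m ℓ) :
    (qeaRaise i p).1 i = p.1 i + 1 :=
  Function.update_self ..

lemma qeaRho_apply_qeaRaise (i : Fin m) {p : QEAIdx m ℓ} (hp : (p.1 i).val + 1 < ℓ)
    (f : QEASpace k m ℓ) : qeaRho k q m ℓ i f (qeaRaise i p) = q ^ (p.2 i).val * f p := by
  rw [qeaRho_apply, if_pos (by rw [qeaRaise_fst_apply_self, Fin.val_add_one_of_lt' hp]; omega)]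
  have hb : (fun j => if j < i then (qeaRaise i p).2 j - 1 else (qeaRaise i p).2 j) = p.2 := by
    funext j
    by_cases hj : j < i <;> simp [qeaRaise, hj]
  simp only [qeaRaise_fst_apply_self, add_sub_cancel_right, hb]
  simp [qeaRaise]

lemma qeaRho_mem_qeaDegLT (i : Fin m) {t : ℕ} {f : QEASpace k m ℓ} (hf : f ∈ qeaDegLT i₀ t) :
    qeaRho k q m ℓ i f ∈ qeaDegLT i₀ (t + 1) := by
  intro p hp
  rw [qeaRho_apply]
  split_ifs with h
  · refine mul_eq_zero_of_right _ (hf _ ?_)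
    dsimp only
    rcases eq_or_ne i₀ i with rfl | hne
    · rw [Function.update_self, val_sub_one_of_one_le h]; omega
    · rw [Function.update_of_ne hne]; omega
  · rfl

lemma qeaRhoLam_mem_qeaDegLT (lam : Fin m → k) {t : ℕ} {f : QEASpace k m ℓ}
    (hf : f ∈ qeaDegLT i₀ t) : qeaRhoLam q ℓ lam f ∈ qeaDegLT i₀ (t + 1) := by
  rw [qeaRhoLam, LinearMap.sum_apply]
  exact Submodule.sum_mem _ fun i _ => Submodule.smul_mem _ _ (qeaRho_mem_qeaDegLT i₀ i hf)

lemma qeaRhoLam_pow_mem_qeaDegLT (lam : Fin m → k) {t : ℕ} {f : QEASpace k m ℓ}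
    (hf : f ∈ qeaDegLT i₀ t) (j : ℕ) : (qeaRhoLam q ℓ lam ^ j) f ∈ qeaDegLT i₀ (t + j) := by
  induction j with
  | zero => exact hf
  | succ j ih => rw [pow_succ', Module.End.mul_apply]; exact qeaRhoLam_mem_qeaDegLT i₀ lam ih

lemma qeaRhoLam_apply_of_mem_qeaDegLT (lam : Fin m → k) {t : ℕ} {f : QEASpace k m ℓ}
    (hf : f ∈ qeaDegLT i₀ t) {p : QEAIdx m ℓ} (hp : (p.1 i₀).val = t) :
    qeaRhoLam q ℓ lam f p = lam i₀ * qeaRho k q m ℓ i₀ f p := by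
  rw [qeaRhoLam_apply, Finset.sum_eq_single i₀ _ (by simp)]
  intro i _ hi
  rw [qeaRho_apply]
  split_ifs
  · rw [hf _ (by dsimp only; rw [Function.update_of_ne hi.symm]; omega), mul_zero, mul_zero]
  · rw [mul_zero]

lemma mem_qeaDegLT_of_qeaRhoLam_mem {lam : Fin m → k} (hq : q ≠ 0) (hlam : lam i₀ ≠ 0) {t : ℕ}
    (ht : t + 1 < ℓ) {f : QEASpace k m ℓ} (hf : f ∈ qeaDegLT i₀ (t + 1))
    (hρf : qeaRhoLam q ℓ lam f ∈ qeaDegLT i₀ (t + 1)) : f ∈ qeaDegLT i₀ t := by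
  intro p hp
  rcases hp.lt_or_eq with hlt | heq
  · exact hf p hlt
  · have hdeg : ((qeaRaise i₀ p).1 i₀).val = t + 1 := by
      rw [qeaRaise_fst_apply_self, Fin.val_add_one_of_lt' (by omega), ← heq]
    have h := hρf _ hdeg.ge
    rw [qeaRhoLam_apply_of_mem_qeaDegLT i₀ lam hf hdeg, qeaRho_apply_qeaRaise i₀ (by omega)] at h
    simpa [hlam, hq] using h

lemma mem_qeaDegLT_of_qeaRhoLam_pow_mem {lam : Fin m → k} (hq : q ≠ 0) (hlam : lam i₀ ≠ 0)
    (j : ℕ) {t : ℕ} (ht : t + j < ℓ) {f : QEASpace k m ℓ} (hf : f ∈ qeaDegLT i₀ (t + 1))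
    (hρf : (qeaRhoLam q ℓ lam ^ j) f ∈ qeaDegLT i₀ (t + j)) : f ∈ qeaDegLT i₀ t := by
  induction j generalizing t f with
  | zero => exact hρf
  | succ j ih =>
    rw [pow_succ, Module.End.mul_apply] at hρf
    refine mem_qeaDegLT_of_qeaRhoLam_mem i₀ hq hlam (by omega) hf (ih (by omega) ?_ ?_)
    · exact qeaRhoLam_mem_qeaDegLT i₀ lam hf
    · rwa [add_right_comm]

lemma disjoint_qeaDegLT_one_ker_qeaRhoLam_pow {lam : Fin m → k} (hq : q ≠ 0)
    (hlam : lam i₀ ≠ 0) :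
    Disjoint (qeaDegLT i₀ 1) (LinearMap.ker (qeaRhoLam q ℓ lam ^ (ℓ - 1))) := by
  rw [Submodule.disjoint_def]
  intro f hf hker
  have h := mem_qeaDegLT_of_qeaRhoLam_pow_mem i₀ hq hlam (ℓ - 1) (t := 0)
    (by have := NeZero.pos ℓ; omega) hf (by rw [LinearMap.mem_ker.mp hker]; exact zero_mem _)
  rwa [qeaDegLT_zero] at h

end Filtration

section Dimension

variable {k : Type*} [Field k] {m ℓ : ℕ}

lemma finrank_qeaSpace (i₀ : Fin m) :
    Module.finrank k (QEASpace k m ℓ) = ℓ * ℓ ^ (2 * m - 1) := by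
  have hm := i₀.pos
  simp only [Module.finrank_fintype_fun_eq_card, Fintype.card_prod, Fintype.card_fun,
    Fintype.card_fin, ← pow_add, ← pow_succ']
  congr 1
  omega

variable [NeZero ℓ]

lemma card_qeaIdx_fst_apply_eq_zero (i₀ : Fin m) :
    Fintype.card {p : QEAIdx m ℓ // p.1 i₀ = 0} = ℓ ^ (2 * m - 1) := by
  have hm := i₀.pos
  have split : {a : Fin m → Fin ℓ // a i₀ = 0} ≃ {x : Fin ℓ × ({j // j ≠ i₀} → Fin ℓ) // x.1 = 0} :=
    (Equiv.funSplitAt i₀ (Fin ℓ)).subtypeEquiv fun _ => Iff.rfl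
  rw [Fintype.card_congr
      (Equiv.prodSubtypeFstEquivSubtypeProd (p := fun a : Fin m → Fin ℓ => a i₀ = 0)),
    Fintype.card_prod, Fintype.card_congr split,
    Fintype.card_congr (Equiv.prodSubtypeFstEquivSubtypeProd (p := fun x : Fin ℓ => x = 0))]
  simp only [Fintype.card_prod, Fintype.card_fun, Fintype.card_fin,
    Fintype.card_subtype_compl, Fintype.card_unique, one_mul, ← pow_add]
  congr 1
  omega

lemma le_finrank_range_qeaRhoLam_pow {q : k} (i₀ : Fin m) {lam : Fin m → k} (hq : q ≠ 0)
    (hlam : lam i₀ ≠ 0) :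
    ℓ ^ (2 * m - 1) ≤ Module.finrank k (LinearMap.range (qeaRhoLam q ℓ lam ^ (ℓ - 1))) := by
  let e : {p : QEAIdx m ℓ // p.1 i₀ = 0} → QEASpace k m ℓ := fun p => Pi.single p.1 1
  have he : LinearIndependent k e :=
    (Pi.linearIndependent_single_one (QEAIdx m ℓ) k).comp _ Subtype.val_injective
  have hspan : Submodule.span k (Set.range e) ≤ qeaDegLT i₀ 1 := by
    refine Submodule.span_le.mpr (Set.range_subset_iff.mpr fun p => ?_)
    have h := single_mem_qeaDegLT (k := k) i₀ p.1
    rwa [p.2, Fin.val_zero] at h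
  have hρe := he.map ((disjoint_qeaDegLT_one_ker_qeaRhoLam_pow i₀ hq hlam).mono_left hspan)
  calc ℓ ^ (2 * m - 1)
      = Module.finrank k
          (Submodule.span k (Set.range (⇑(qeaRhoLam q ℓ lam ^ (ℓ - 1)) ∘ e))) := by
        rw [finrank_span_eq_card hρe, card_qeaIdx_fst_apply_eq_zero]
    _ ≤ _ := Submodule.finrank_mono (Submodule.span_le.mpr
        (Set.range_subset_iff.mpr fun p => LinearMap.mem_range_self _ _))

end Dimension

theorem statement4_general {k : Type*} [Field k] {ℓ : ℕ} [NeZero ℓ] {q : k}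
    (hq : q ^ ℓ = 1) (hq' : ∀ s : ℕ, 0 < s → s < ℓ → q ^ s ≠ 1)
    {m : ℕ} (lam : Fin m → k) (hlam : lam ≠ 0) :
    Module.finrank k
        (LinearMap.range ((∑ i, lam i • qeaRho k q m ℓ i) ^ (ℓ - 1))) = ℓ ^ (2 * m - 1) ∧
    Module.finrank k
        (LinearMap.range (∑ i, lam i • qeaRho k q m ℓ i)) = (ℓ - 1) * ℓ ^ (2 * m - 1) := by
  obtain ⟨i₀, hi₀⟩ : ∃ i, lam i ≠ 0 := Function.ne_iff.mp hlam
  have hprim : IsPrimitiveRoot q ℓ := IsPrimitiveRoot.mk_of_lt q (NeZero.pos ℓ) hq hq'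
  have hrank {j : ℕ} (hj : j ≤ ℓ) :
      Module.finrank k (LinearMap.range (qeaRhoLam q ℓ lam ^ j)) = (ℓ - j) * ℓ ^ (2 * m - 1) :=
    finrank_range_pow_of_pow_eq_zero (qeaRhoLam_pow_eq_zero hprim lam) (finrank_qeaSpace i₀)
      (le_finrank_range_qeaRhoLam_pow i₀ (hprim.ne_zero (NeZero.ne ℓ)) hi₀) hj
  have hℓ := NeZero.pos ℓ
  refine ⟨?_, ?_⟩
  · rw [← qeaRhoLam, hrank (by omega), show ℓ - (ℓ - 1) = 1 by omega, one_mul]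
  · rw [← qeaRhoLam, ← pow_one (qeaRhoLam q ℓ lam), hrank hℓ]

/-- **Lemma 2.4(iii).**  For every nonzero `λ ∈ k^m`, with `ρ_λ = λ_1 ρ_1 + ⋯ + λ_m ρ_m`
(right multiplication by `τ_λ(t)` on `A`), the images of `ρ_λ^{ℓ−1}` and of `ρ_λ` — the left
ideals `V(λ) = A·τ_λ(t)^{ℓ−1}` and `V′(λ) = A·τ_λ(t)` — have
`dim_k V(λ) = ℓ^{2m−1}` and `dim_k V′(λ) = (ℓ−1)·ℓ^{2m−1}`. -/
theorem statement4 {k : Type*} [Field k] {ℓ : ℕ} (hℓ : 2 ≤ ℓ) [NeZero ℓ] {q : k}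
    (hq : q ^ ℓ = 1) (hq' : ∀ s : ℕ, 0 < s → s < ℓ → q ^ s ≠ 1)
    {m : ℕ} (hm : 0 < m) (lam : Fin m → k) (hlam : lam ≠ 0) :
    Module.finrank k
        (LinearMap.range ((∑ i, lam i • qeaRho k q m ℓ i) ^ (ℓ - 1))) = ℓ ^ (2 * m - 1) ∧
    Module.finrank k
        (LinearMap.range (∑ i, lam i • qeaRho k q m ℓ i)) = (ℓ - 1) * ℓ ^ (2 * m - 1) :=
  statement4_general hq hq' lam hlam
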